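/- Let f : ℝⁿ → ℝ be convex, ρ > 0, and let x_* be a minimizer of f. If y ∈ ℝⁿ minimizes the function z ↦ f(z) + (1/(2ρ))‖z − x‖² over ℝⁿ, then ‖y − x_*‖ ≤ ‖x − x_*‖. Consequently, the proximal point method iterates x_{k+1} = prox_{ρ,f}(x_k) satisfy ‖x_k − x_*‖ ≤ ‖x_0 − x_*‖ for all k. -/

import Mathlib

/-!
If `y = prox_{ρ,f}(x)` then `y` is the nearest point to `x` in the sublevel set `{z | f z ≤ f y}`,
since on that set the term `f z` of the prox objective is at most `f y`. The sublevel set is convex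
and contains every minimizer `xs`, so by the variational characterization of projections onto
convex sets the angle at `y` in the triangle `x, y, xs` is obtuse, which makes `x xs` its longest
side.
-/

noncomputable section

/-- `y` is the prox point `prox_{ρ,f}(x)`, i.e. it minimizes `z ↦ f z + (1/(2ρ))‖z - x‖²`. -/
def IsProx {n : ℕ} (ρ : ℝ) (f : EuclideanSpace ℝ (Fin n) → ℝ)
    (x y : EuclideanSpace ℝ (Fin n)) : Prop :=
  ∀ z, f y + (1 / (2 * ρ)) * ‖y - x‖ ^ 2 ≤ f z + (1 / (2 * ρ)) * ‖z - x‖ ^ 2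

section InnerProductSpace

variable {F : Type*} [NormedAddCommGroup F] [InnerProductSpace ℝ F]

theorem norm_sub_le_norm_sub_of_real_inner_nonpos {x y z : F} (h : inner ℝ (x - y) (z - y) ≤ 0) :
    ‖y - z‖ ≤ ‖x - z‖ := by
  have hsplit : ‖x - z‖ ^ 2 = ‖x - y‖ ^ 2 - 2 * inner ℝ (x - y) (z - y) + ‖z - y‖ ^ 2 := by
    rw [← norm_sub_sq_real, sub_sub_sub_cancel_right]
  rw [norm_sub_rev y z]
  nlinarith [sq_nonneg ‖x - y‖, norm_nonneg (z - y), norm_nonneg (x - z)]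

theorem Convex.norm_sub_le_of_isMinOn {K : Set F} (hK : Convex ℝ K) {x y z : F} (hy : y ∈ K)
    (hmin : IsMinOn (fun w => ‖x - w‖) K y) (hz : z ∈ K) : ‖y - z‖ ≤ ‖x - z‖ :=
  norm_sub_le_norm_sub_of_real_inner_nonpos <|
    (norm_eq_iInf_iff_real_inner_le_zero hK hy).1 (hmin.iInf_eq hy).symm z hz

end InnerProductSpace

namespace IsProx

variable {n : ℕ} {ρ : ℝ} {f : EuclideanSpace ℝ (Fin n) → ℝ} {x y : EuclideanSpace ℝ (Fin n)}

theorem isMinOn_norm_sub_sublevel (hρ : 0 < ρ) (hy : IsProx ρ f x y) :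
    IsMinOn (fun w => ‖x - w‖) {z | f z ≤ f y} y := by
  intro z (hz : f z ≤ f y)
  have hsq : ‖y - x‖ ^ 2 ≤ ‖z - x‖ ^ 2 :=
    le_of_mul_le_mul_left (by linarith [hy z]) (by positivity : (0 : ℝ) < 1 / (2 * ρ))
  show ‖x - y‖ ≤ ‖x - z‖
  rw [norm_sub_rev x, norm_sub_rev x]
  exact (pow_le_pow_iff_left₀ (norm_nonneg _) (norm_nonneg _) two_ne_zero).1 hsq

theorem norm_sub_le_of_le (hconv : ConvexOn ℝ Set.univ f) (hρ : 0 < ρ) (hy : IsProx ρ f x y)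
    {z : EuclideanSpace ℝ (Fin n)} (hz : f z ≤ f y) : ‖y - z‖ ≤ ‖x - z‖ := by
  have hK : Convex ℝ {z | f z ≤ f y} := by
    simpa only [Set.mem_univ, true_and] using hconv.convex_le (f y)
  exact hK.norm_sub_le_of_isMinOn (le_refl (f y)) (hy.isMinOn_norm_sub_sublevel hρ) hz

end IsProx

/-- the prox step does not increase distance to a minimizer, and hence the
proximal point iterates stay within the initial distance of a minimizer. -/
theorem prox_nonexpansive_to_min {n : ℕ} (f : EuclideanSpace ℝ (Fin n) → ℝ) (ρ : ℝ)
    (xs : EuclideanSpace ℝ (Fin n))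
    (hconv : ConvexOn ℝ Set.univ f)
    (hρ : 0 < ρ)
    (hmin : ∀ y, f xs ≤ f y) :
    (∀ x y : EuclideanSpace ℝ (Fin n), IsProx ρ f x y → ‖y - xs‖ ≤ ‖x - xs‖) ∧
    (∀ seq : ℕ → EuclideanSpace ℝ (Fin n),
      (∀ k, IsProx ρ f (seq k) (seq (k + 1))) → ∀ k, ‖seq k - xs‖ ≤ ‖seq 0 - xs‖) := by
  have step : ∀ x y, IsProx ρ f x y → ‖y - xs‖ ≤ ‖x - xs‖ := fun _ y hy =>
    hy.norm_sub_le_of_le hconv hρ (hmin y)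
  refine ⟨step, fun seq hseq k => ?_⟩
  exact antitone_nat_of_succ_le (f := fun k => ‖seq k - xs‖) (fun k => step _ _ (hseq k))
    (Nat.zero_le k)

end
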